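/- Under the operator setup below, κ is invertible and the operators satisfy φ∘φ' − φ'∘φ = (κ − κ⁻¹)/(q − q⁻¹), κ∘φ = q²·φ∘κ, and κ∘φ' = q⁻²·φ'∘κ; that is, (φ, φ', κ) defines a representation of U_q(sl₂) on W with E ↦ φ, F ↦ φ', K ↦ κ. -/

import Mathlib

/-!
Everything is checked on the basis vectors `ψ(l,λ)`. Since `κ` is diagonal with eigenvalue `λ`
while `φ` and `φ'` move `λ` to `q²λ` and `q⁻²λ`, the `K`-relations are immediate. In the
commutator `φφ' − φ'φ` applied to `ψ(l,λ)`, the components along `ψ(l−2,λ)` and `ψ(l−1,λ)`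
cancel term by term, and the diagonal component reduces to `(λ − λ⁻¹)/(q − q⁻¹)` by the two
q-Pascal identities `[l+1] = q[l] + q⁻ˡ = q⁻¹[l] + qˡ`.
-/

noncomputable section

/-- The vector space with basis `ψ(l,λ)`, `l ∈ ℕ₀`, `λ ∈ ℂ∖{0}`. -/
abbrev Wsp : Type := (ℕ × ℂˣ) →₀ ℂ

/-- The basis vector `ψ(l,λ)`. -/
def psi (l : ℕ) (u : ℂˣ) : Wsp := Finsupp.single (l, u) 1

/-- The q-number `[l] = (q^l − q^(−l))/(q − q⁻¹)`. -/
def qnum (q : ℂˣ) (l : ℕ) : ℂ := ((q : ℂ) ^ l - (q : ℂ)⁻¹ ^ l) / ((q : ℂ) - (q : ℂ)⁻¹)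

/-- `φ(ψ(l,λ)) = −(q^l[l]/(q−q⁻¹))·ψ(l−1, q²λ) + αq(q^(2l) − λ)·ψ(l, q²λ)
  + q²(q^(2l) − λ²)·ψ(l+1, q²λ)` (the `ψ(l−1,·)` term has coefficient `[0] = 0` for `l = 0`). -/
def phi (q : ℂˣ) (α : ℂ) : Wsp →ₗ[ℂ] Wsp :=
  Finsupp.lsum ℂ fun i => LinearMap.toSpanSingleton ℂ Wsp
    ((-((q : ℂ) ^ i.1 * qnum q i.1 / ((q : ℂ) - (q : ℂ)⁻¹))) • psi (i.1 - 1) (q ^ 2 * i.2) +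
     (α * (q : ℂ) * ((q : ℂ) ^ (2 * i.1) - (i.2 : ℂ))) • psi i.1 (q ^ 2 * i.2) +
     ((q : ℂ) ^ 2 * ((q : ℂ) ^ (2 * i.1) - (i.2 : ℂ) ^ 2)) • psi (i.1 + 1) (q ^ 2 * i.2))

/-- `φ'(ψ(l,λ)) = λ⁻¹·(q^(1−l)[l]/(q−q⁻¹))·ψ(l−1, q⁻²λ)`. -/
def phi' (q : ℂˣ) : Wsp →ₗ[ℂ] Wsp :=
  Finsupp.lsum ℂ fun i => LinearMap.toSpanSingleton ℂ Wsp
    ((((i.2 : ℂ))⁻¹ * ((q : ℂ) ^ ((1 : ℤ) - (i.1 : ℤ)) * qnum q i.1 / ((q : ℂ) - (q : ℂ)⁻¹))) •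
      psi (i.1 - 1) ((q ^ 2)⁻¹ * i.2))

/-- `κ(ψ(l,λ)) = λ·ψ(l,λ)`. -/
def kappa : Wsp →ₗ[ℂ] Wsp :=
  Finsupp.lsum ℂ fun i => LinearMap.toSpanSingleton ℂ Wsp (((i.2 : ℂ)) • psi i.1 i.2)

/-- `κ⁻¹(ψ(l,λ)) = λ⁻¹·ψ(l,λ)`. -/
def kappaInv : Wsp →ₗ[ℂ] Wsp :=
  Finsupp.lsum ℂ fun i => LinearMap.toSpanSingleton ℂ Wsp (((i.2 : ℂ))⁻¹ • psi i.1 i.2)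

theorem sub_inv_ne_zero_of_sq_ne_one {K : Type*} [Field K] {x : K} (hx0 : x ≠ 0) (hx : x ^ 2 ≠ 1) :
    x - x⁻¹ ≠ 0 := by
  rw [sub_ne_zero]
  contrapose! hx
  field_simp at hx
  linear_combination hx

section

variable {q : ℂˣ}

theorem qnum_zero : qnum q 0 = 0 := by simp [qnum]

theorem qnum_one (hq : (q : ℂ) - (q : ℂ)⁻¹ ≠ 0) : qnum q 1 = 1 := by simp [qnum, hq]

theorem qnum_succ (hq : (q : ℂ) - (q : ℂ)⁻¹ ≠ 0) (l : ℕ) :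
    qnum q (l + 1) = q * qnum q l + ((q : ℂ) ^ l)⁻¹ := by
  simp only [qnum, ← inv_pow]
  generalize (q : ℂ)⁻¹ = y at hq ⊢
  field_simp
  ring

theorem qnum_succ' (hq : (q : ℂ) - (q : ℂ)⁻¹ ≠ 0) (l : ℕ) :
    qnum q (l + 1) = (q : ℂ)⁻¹ * qnum q l + (q : ℂ) ^ l := by
  simp only [qnum]
  generalize (q : ℂ)⁻¹ = y at hq ⊢
  field_simp
  ring

end

theorem Wsp.linearMap_ext {f g : Wsp →ₗ[ℂ] Wsp} (h : ∀ l u, f (psi l u) = g (psi l u)) :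
    f = g :=
  Finsupp.lhom_ext' fun i => LinearMap.ext_ring (h i.1 i.2)

section

variable (q : ℂˣ) (α : ℂ) (l : ℕ) (u : ℂˣ)

@[simp]
theorem phi_psi :
    phi q α (psi l u) =
      (-((q : ℂ) ^ l * qnum q l / ((q : ℂ) - (q : ℂ)⁻¹))) • psi (l - 1) (q ^ 2 * u) +
      (α * (q : ℂ) * ((q : ℂ) ^ (2 * l) - (u : ℂ))) • psi l (q ^ 2 * u) +
      ((q : ℂ) ^ 2 * ((q : ℂ) ^ (2 * l) - (u : ℂ) ^ 2)) • psi (l + 1) (q ^ 2 * u) := by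
  simp [phi, psi]

@[simp]
theorem phi'_psi :
    phi' q (psi l u) =
      ((u : ℂ)⁻¹ * ((q : ℂ) * ((q : ℂ) ^ l)⁻¹ * qnum q l / ((q : ℂ) - (q : ℂ)⁻¹))) •
        psi (l - 1) ((q ^ 2)⁻¹ * u) := by
  simp [phi', psi, zpow_sub₀ q.ne_zero, div_eq_mul_inv]

@[simp]
theorem kappa_psi : kappa (psi l u) = (u : ℂ) • psi l u := by
  simp [kappa, psi]

@[simp]
theorem kappaInv_psi : kappaInv (psi l u) = (u : ℂ)⁻¹ • psi l u := by
  simp [kappaInv, psi]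

end

theorem kappa_comp_kappaInv : kappa ∘ₗ kappaInv = LinearMap.id :=
  Wsp.linearMap_ext fun l u => by simp [smul_smul, u.ne_zero]

theorem kappaInv_comp_kappa : kappaInv ∘ₗ kappa = LinearMap.id :=
  Wsp.linearMap_ext fun l u => by simp [smul_smul, u.ne_zero]

theorem kappa_comp_phi (q : ℂˣ) (α : ℂ) :
    kappa ∘ₗ phi q α = (q : ℂ) ^ 2 • (phi q α ∘ₗ kappa) :=
  Wsp.linearMap_ext fun l u => by
    simp only [LinearMap.comp_apply, LinearMap.smul_apply, phi_psi, kappa_psi, map_add, map_smul]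
    module

theorem kappa_comp_phi' (q : ℂˣ) :
    kappa ∘ₗ phi' q = ((q : ℂ) ^ 2)⁻¹ • (phi' q ∘ₗ kappa) :=
  Wsp.linearMap_ext fun l u => by
    simp only [LinearMap.comp_apply, LinearMap.smul_apply, phi'_psi, kappa_psi, map_smul, smul_smul,
      Units.val_mul, Units.val_inv_eq_inv_val, Units.val_pow_eq_pow_val]
    congr 1
    field_simp

theorem phi_comp_phi'_sub_phi'_comp_phi (q : ℂˣ) (α : ℂ) (hq : (q : ℂ) ^ 2 ≠ 1) :
    phi q α ∘ₗ phi' q - phi' q ∘ₗ phi q α = ((q : ℂ) - (q : ℂ)⁻¹)⁻¹ • (kappa - kappaInv) := by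
  have hd := sub_inv_ne_zero_of_sq_ne_one q.ne_zero hq
  have hq0 := q.ne_zero
  refine Wsp.linearMap_ext fun l u => ?_
  have hu := u.ne_zero
  simp only [LinearMap.sub_apply, LinearMap.comp_apply, LinearMap.smul_apply, phi_psi, phi'_psi,
    kappa_psi, kappaInv_psi, map_add, map_smul, smul_add, smul_sub, smul_smul, inv_mul_cancel_left,
    mul_inv_cancel_left, Units.val_mul, Units.val_inv_eq_inv_val, Units.val_pow_eq_pow_val]
  rcases l with _ | m
  -- `l = 0`: truncated `l - 1` turns `ψ(l-1, ·)` into `ψ(0, ·)`, harmless since `[0] = 0`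
  · simp only [qnum_zero, qnum_one hd, zero_tsub, mul_zero, zero_mul, zero_div, neg_zero, zero_smul,
      zero_add]
    match_scalars
    field_simp
    ring
  · simp only [add_tsub_cancel_right]
    match_scalars
    · field_simp; ring
    · field_simp; ring
    · linear_combination (norm := skip)
        (-((u : ℂ)⁻¹ * (q : ℂ) ^ (m + 1) / ((q : ℂ) - (q : ℂ)⁻¹))) * qnum_succ hd (m + 1) +
        ((u : ℂ) * ((q : ℂ) ^ (m + 1))⁻¹ / ((q : ℂ) - (q : ℂ)⁻¹)) * qnum_succ' hd (m + 1)
      field_simp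
      ring

theorem stmt13 (q : ℂˣ) (hq' : ∀ k : ℕ, 0 < k → (q : ℂ) ^ k ≠ 1) (α : ℂ) :
    kappa ∘ₗ kappaInv = LinearMap.id ∧ kappaInv ∘ₗ kappa = LinearMap.id ∧
    phi q α ∘ₗ phi' q - phi' q ∘ₗ phi q α =
      ((q : ℂ) - (q : ℂ)⁻¹)⁻¹ • (kappa - kappaInv) ∧
    kappa ∘ₗ phi q α = (q : ℂ) ^ 2 • (phi q α ∘ₗ kappa) ∧
    kappa ∘ₗ phi' q = ((q : ℂ) ^ 2)⁻¹ • (phi' q ∘ₗ kappa) :=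
  ⟨kappa_comp_kappaInv, kappaInv_comp_kappa, phi_comp_phi'_sub_phi'_comp_phi q α (hq' 2 two_pos),
    kappa_comp_phi q α, kappa_comp_phi' q⟩

end
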